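/- arXiv:2510.19744 — 4 statements merged into one kernel-verified Lean document; each statement's English description precedes it below -/
import Mathlib

section
/- Let A be a Boolean algebra, (μ_n) an anti-Nikodym sequence of measures on A (i.e. μ_n(B) → 0 for every B ∈ A and sup_n ‖μ_n‖ = ∞), and t an ultrafilter on A that is a Nikodym concentration point of (μ_n) (i.e. sup_n ‖μ_n ↾ A‖ = ∞ for every A ∈ t). Then for every α > 0 and every A ∈ t there exist n ∈ ω and B ≤ A with B ∉ t such that |μ_n(B)| > α. -/
/-!
Fix `r > 0` and `A ∈ t`. Since `μ_n(A) → 0` while `sup_n ‖μ_n ↾ A‖ = ∞` and every `‖μ_n‖` is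
finite, there is an `n` with `|μ_n(A)| < r` and `‖μ_n ↾ A‖ > 4r`, hence some `C ≤ A` with
`|μ_n(C)| > 2r`. If `C ∉ t` we are done; otherwise `A \ C ∉ t`, as it is disjoint from `C`, and
`|μ_n(A \ C)| ≥ |μ_n(C)| - |μ_n(A)| > r`.
-/

open Filter
open scoped ENNReal

variable {α : Type*}

/-- Finite additivity of a real-valued set function on a Boolean algebra. -/
def FinAdd [BooleanAlgebra α] (μ : α → ℝ) : Prop :=
  ∀ a b : α, a ⊓ b = ⊥ → μ (a ⊔ b) = μ a + μ b

/-- The variation of `μ` over the subfamily `s`: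
`sup {|μ a| + |μ b| : a, b ∈ s, a ⊓ b = ⊥}`, computed in `ℝ≥0∞`. -/
noncomputable def svar [BooleanAlgebra α] (μ : α → ℝ) (s : Set α) : ℝ≥0∞ :=
  ⨆ p : {p : α × α // p.1 ∈ s ∧ p.2 ∈ s ∧ p.1 ⊓ p.2 = ⊥},
    ENNReal.ofReal (|μ p.1.1| + |μ p.1.2|)

/-- The variation norm of the restriction `μ ↾ a`, i.e. `|μ|(a)`. -/
noncomputable def bvar [BooleanAlgebra α] (μ : α → ℝ) (a : α) : ℝ≥0∞ :=
  svar μ (Set.Iic a)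

/-- `t` is an ultrafilter on the Boolean algebra `α`. -/
structure IsUltrafilterSet [BooleanAlgebra α] (t : Set α) : Prop where
  top_mem : ⊤ ∈ t
  bot_not_mem : ⊥ ∉ t
  mem_of_le : ∀ ⦃a b : α⦄, a ∈ t → a ≤ b → b ∈ t
  inf_mem : ∀ ⦃a b : α⦄, a ∈ t → b ∈ t → a ⊓ b ∈ t

theorem exists_lt_of_iSup_eq_top {β : Type*} [CompleteLinearOrder β] {f : ℕ → β}
    (hf : ∀ n, f n < ⊤) (hsup : ⨆ n, f n = ⊤) (N : ℕ) {x : β} (hx : x < ⊤) :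
    ∃ n ≥ N, x < f n := by
  by_contra! hle
  have hbound : ⨆ n, f n ≤ (Finset.range N).sup f ⊔ x := by
    refine iSup_le fun n => ?_
    rcases lt_or_ge n N with hn | hn
    · exact le_sup_of_le_left (Finset.le_sup (Finset.mem_range.2 hn))
    · exact le_sup_of_le_right (hle n hn)
  have hfin : (Finset.range N).sup f ⊔ x < ⊤ :=
    max_lt ((Finset.sup_lt_iff (bot_le.trans_lt hx)).2 fun n _ => hf n) hx
  exact (hbound.trans_lt hfin).ne hsup

section BooleanAlgebra

variable [BooleanAlgebra α]

theorem svar_mono (μ : α → ℝ) {s u : Set α} (h : s ⊆ u) : svar μ s ≤ svar μ u :=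
  iSup_le fun ⟨p, hp₁, hp₂, hp⟩ => le_iSup_of_le ⟨p, h hp₁, h hp₂, hp⟩ le_rfl

theorem bvar_le_bvar_top (μ : α → ℝ) (a : α) : bvar μ a ≤ bvar μ ⊤ :=
  svar_mono μ (Set.Iic_subset_Iic.2 le_top)

theorem exists_le_lt_abs_of_ofReal_lt_bvar {μ : α → ℝ} {a : α} {s : ℝ}
    (h : ENNReal.ofReal (2 * s) < bvar μ a) : ∃ c ≤ a, s < |μ c| := by
  obtain ⟨⟨⟨b, c⟩, hb, hc, _⟩, hlt⟩ := lt_iSup_iff.1 h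
  have hsum : 2 * s < |μ b| + |μ c| := (ENNReal.ofReal_lt_ofReal_iff'.1 hlt).1
  rcases lt_or_ge s |μ b| with hsb | hsb
  · exact ⟨b, hb, hsb⟩
  · exact ⟨c, hc, by linarith⟩

theorem FinAdd.map_sdiff {μ : α → ℝ} (hμ : FinAdd μ) {a c : α} (hca : c ≤ a) :
    μ (a \ c) = μ a - μ c := by
  have h := hμ c (a \ c) inf_sdiff_self_right
  rw [sup_sdiff_cancel_right hca] at h
  linarith

theorem IsUltrafilterSet.sdiff_notMem {t : Set α} (ht : IsUltrafilterSet t) {c : α}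
    (hc : c ∈ t) (a : α) : a \ c ∉ t := fun hac =>
  ht.bot_not_mem (inf_sdiff_self_right (x := c) (y := a) ▸ ht.inf_mem hc hac)

theorem IsUltrafilterSet.exists_le_notMem_lt_abs {t : Set α} (ht : IsUltrafilterSet t)
    {μ : α → ℝ} (hμ : FinAdd μ) {a c : α} {r : ℝ} (hca : c ≤ a) (ha : |μ a| < r)
    (hc : 2 * r < |μ c|) : ∃ b ≤ a, b ∉ t ∧ r < |μ b| := by
  by_cases hct : c ∈ t
  · refine ⟨a \ c, sdiff_le, ht.sdiff_notMem hct a, ?_⟩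
    have := abs_sub_abs_le_abs_sub (μ c) (μ a)
    rw [hμ.map_sdiff hca, abs_sub_comm]
    linarith
  · exact ⟨c, hca, hct, by linarith [abs_nonneg (μ a)]⟩

end BooleanAlgebra

theorem stmt_1_general [BooleanAlgebra α] (μ : ℕ → α → ℝ)
    (hadd : ∀ n, FinAdd (μ n)) (hbdd : ∀ n, bvar (μ n) ⊤ ≠ ⊤)
    (hpt : ∀ a : α, Tendsto (fun n => μ n a) atTop (nhds 0))
    (t : Set α) (ht : IsUltrafilterSet t)
    (hconc : ∀ A ∈ t, (⨆ n, bvar (μ n) A) = ⊤) :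
    ∀ r : ℝ, 0 < r → ∀ A ∈ t, ∃ (n : ℕ) (B : α), B ≤ A ∧ B ∉ t ∧ r < |μ n B| := by
  intro r hr A hA
  obtain ⟨N, hsmall⟩ : ∃ N, ∀ n ≥ N, |μ n A| < r := by
    have hlim : Tendsto (fun n => |μ n A|) atTop (nhds 0) := by
      simpa using (hpt A).abs
    exact eventually_atTop.1 (hlim.eventually_lt_const hr)
  obtain ⟨n, hnN, hlarge⟩ : ∃ n ≥ N, ENNReal.ofReal (2 * (2 * r)) < bvar (μ n) A :=
    exists_lt_of_iSup_eq_top (fun n => (bvar_le_bvar_top _ A).trans_lt (hbdd n).lt_top)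
      (hconc A hA) N ENNReal.ofReal_lt_top
  obtain ⟨C, hCA, hC⟩ := exists_le_lt_abs_of_ofReal_lt_bvar hlarge
  obtain ⟨B, hBA, hBt, hB⟩ := ht.exists_le_notMem_lt_abs (hadd n) hCA (hsmall n hnN) hC
  exact ⟨n, B, hBA, hBt, hB⟩

/-- If `(μ_n)` is an anti-Nikodym sequence on `α` and `t` is a Nikodym concentration point
of `(μ_n)`, then for every `r > 0` and `A ∈ t` there are `n` and `B ≤ A` with `B ∉ t` and
`|μ_n(B)| > r`. -/
theorem stmt_1 [BooleanAlgebra α] (μ : ℕ → α → ℝ)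
    (hadd : ∀ n, FinAdd (μ n)) (hbdd : ∀ n, bvar (μ n) ⊤ ≠ ⊤)
    (hpt : ∀ a : α, Tendsto (fun n => μ n a) atTop (nhds 0))
    (hub : (⨆ n, bvar (μ n) ⊤) = ⊤)
    (t : Set α) (ht : IsUltrafilterSet t)
    (hconc : ∀ A ∈ t, (⨆ n, bvar (μ n) A) = ⊤) :
    ∀ r : ℝ, 0 < r → ∀ A ∈ t, ∃ (n : ℕ) (B : α), B ≤ A ∧ B ∉ t ∧ r < |μ n B| :=
  stmt_1_general μ hadd hbdd hpt t ht hconc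
end

section
/- Let A be a Boolean algebra and (μ_n) an anti-Nikodym sequence of measures on A. Then there exist an antichain (A_k) in A and a strictly increasing sequence (n_k) of natural numbers such that |μ_{n_k}(A_k)| > k for every k. -/
open Filter
open scoped ENNReal

variable {α : Type*}

/-!
Call `a` heavy when `sup_n |μ_n|(a) = ∞`. Inside a heavy `a`, take `n` beyond any given index
with `|μ_n|(a)` large, and `b ≤ a` with `|μ_n(b)|` large. Since `μ_n(a) → 0`, also
`|μ_n(a \ b)|` is large for large `n`; and as `|μ_n|(a) ≤ |μ_n|(b) + |μ_n|(a \ b)`, one of the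
two pieces is heavy. Cut off the other piece and continue inside the heavy one: the pieces cut
off form the antichain.
-/

open Function

/-- Greedy exhaustion: pieces cut off from a decreasing chain of elements are disjoint. -/
theorem exists_strictMono_pairwise_disjoint {β : Type*} [GeneralizedBooleanAlgebra β]
    {P : β → Prop} {Q : ℕ → ℕ → β → Prop} {a₀ : β} (h₀ : P a₀)
    (hstep : ∀ a, P a → ∀ k N : ℕ, ∃ n, N < n ∧ ∃ b ≤ a, Q k n b ∧ P (a \ b)) :
    ∃ (A : ℕ → β) (nk : ℕ → ℕ), StrictMono nk ∧ Pairwise (Disjoint on A) ∧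
      ∀ k, Q k (nk k) (A k) := by
  choose! n hn b hb hQ hP using hstep
  let s : ℕ → ℕ × β := fun k =>
    Nat.rec (0, a₀) (fun k q => (n q.2 k q.1, q.2 \ b q.2 k q.1)) k
  have hsP : ∀ k, P (s k).2 := fun k => by
    induction k with
    | zero => exact h₀
    | succ k ih => exact hP _ ih _ _
  have hanti : Antitone fun k => (s k).2 := antitone_nat_of_succ_le fun k => sdiff_le
  refine ⟨fun k => b (s k).2 k (s k).1, fun k => n (s k).2 k (s k).1,
    strictMono_nat_of_lt_succ fun k => hn _ (hsP (k + 1)) _ _,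
    (pairwise_disjoint_on _).mpr fun k j hkj => ?_, fun k => hQ _ (hsP k) _ _⟩
  exact disjoint_sdiff_self_right.mono_right
    ((hb _ (hsP j) _ _).trans (hanti (Nat.succ_le_of_lt hkj)))

section Variation

variable [BooleanAlgebra α] {μ : α → ℝ}

theorem FinAdd.map_bot (hμ : FinAdd μ) : μ ⊥ = 0 := by
  simpa using hμ ⊥ ⊥ (bot_inf_eq ⊥)

theorem FinAdd.map_eq_add_of_le_sup (hμ : FinAdd μ) {b c d : α} (hbc : b ⊓ c = ⊥)
    (hd : d ≤ b ⊔ c) : μ d = μ (d ⊓ b) + μ (d ⊓ c) := by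
  have hdisj : (d ⊓ b) ⊓ (d ⊓ c) = ⊥ :=
    le_bot_iff.mp (hbc ▸ inf_le_inf inf_le_right inf_le_right)
  rw [← hμ _ _ hdisj, ← inf_sup_left, inf_eq_left.mpr hd]

theorem ofReal_abs_add_le_svar {s : Set α} {b c : α} (hb : b ∈ s) (hc : c ∈ s)
    (hbc : b ⊓ c = ⊥) : ENNReal.ofReal (|μ b| + |μ c|) ≤ svar μ s :=
  le_iSup (fun p : {p : α × α // p.1 ∈ s ∧ p.2 ∈ s ∧ p.1 ⊓ p.2 = ⊥} =>
    ENNReal.ofReal (|μ p.1.1| + |μ p.1.2|)) ⟨(b, c), hb, hc, hbc⟩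

theorem bvar_mono {a a' : α} (h : a ≤ a') : bvar μ a ≤ bvar μ a' :=
  iSup_le fun ⟨_, hd, he, hde⟩ => ofReal_abs_add_le_svar (le_trans hd h) (le_trans he h) hde

theorem FinAdd.bvar_sup_le (hμ : FinAdd μ) {b c : α} (hbc : b ⊓ c = ⊥) :
    bvar μ (b ⊔ c) ≤ bvar μ b + bvar μ c := by
  refine iSup_le fun ⟨⟨d, e⟩, hd, he, hde⟩ => ?_
  have hdisj : ∀ x, (d ⊓ x) ⊓ (e ⊓ x) = ⊥ := fun x =>
    le_bot_iff.mp (hde ▸ inf_le_inf inf_le_left inf_le_left)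
  have habs : |μ d| + |μ e| ≤
      (|μ (d ⊓ b)| + |μ (e ⊓ b)|) + (|μ (d ⊓ c)| + |μ (e ⊓ c)|) := by
    rw [hμ.map_eq_add_of_le_sup hbc hd, hμ.map_eq_add_of_le_sup hbc he]
    linarith [abs_add_le (μ (d ⊓ b)) (μ (d ⊓ c)), abs_add_le (μ (e ⊓ b)) (μ (e ⊓ c))]
  calc ENNReal.ofReal (|μ d| + |μ e|)
      ≤ ENNReal.ofReal (|μ (d ⊓ b)| + |μ (e ⊓ b)|) +
          ENNReal.ofReal (|μ (d ⊓ c)| + |μ (e ⊓ c)|) :=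
        (ENNReal.ofReal_le_ofReal habs).trans ENNReal.ofReal_add_le
    _ ≤ bvar μ b + bvar μ c :=
        add_le_add (ofReal_abs_add_le_svar inf_le_right inf_le_right (hdisj b))
          (ofReal_abs_add_le_svar inf_le_right inf_le_right (hdisj c))

theorem exists_lt_abs_of_ofReal_lt_bvar {a : α} {r : ℝ}
    (h : ENNReal.ofReal (2 * r) < bvar μ a) : ∃ b ≤ a, r < |μ b| := by
  rw [bvar, svar, lt_iSup_iff] at h
  obtain ⟨⟨⟨d, e⟩, hd, he, _⟩, hp⟩ := h
  have hsum : 2 * r < |μ d| + |μ e| := (ENNReal.ofReal_lt_ofReal_iff'.mp hp).1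
  rcases le_or_gt |μ d| r with hdr | hdr
  exacts [⟨e, he, by linarith⟩, ⟨d, hd, hdr⟩]

end Variation

section Heavy

variable [BooleanAlgebra α] {μ : ℕ → α → ℝ}

def IsHeavy (μ : ℕ → α → ℝ) (a : α) : Prop :=
  (⨆ n, bvar (μ n) a) = ⊤

theorem IsHeavy.exists_lt_bvar (hbdd : ∀ n, bvar (μ n) ⊤ ≠ ⊤) {a : α} (ha : IsHeavy μ a)
    {C : ℝ≥0∞} (hC : C ≠ ⊤) (N : ℕ) : ∃ n, N < n ∧ C < bvar (μ n) a := by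
  by_contra! h
  let D : ℝ≥0∞ := C ⊔ (Finset.range (N + 1)).sup fun m => bvar (μ m) a
  have hD : D ≠ ⊤ := by
    refine max_ne_top hC (Finset.sup_lt_iff ENNReal.zero_lt_top |>.mpr fun m _ => ?_).ne
    exact (bvar_mono le_top).trans_lt (hbdd m).lt_top
  refine hD (top_le_iff.mp (ha ▸ iSup_le fun n => ?_))
  rcases le_or_gt n N with hn | hn
  · exact le_sup_of_le_right (Finset.le_sup (f := fun m => bvar (μ m) a)
      (Finset.mem_range.mpr (Nat.lt_succ_of_le hn)))
  · exact le_sup_of_le_left (h n hn)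

theorem IsHeavy.left_or_right_of_sup (hadd : ∀ n, FinAdd (μ n)) {b c : α} (hbc : b ⊓ c = ⊥)
    (h : IsHeavy μ (b ⊔ c)) : IsHeavy μ b ∨ IsHeavy μ c := by
  by_contra! hlight
  have hle : (⨆ n, bvar (μ n) (b ⊔ c)) ≤ (⨆ n, bvar (μ n) b) + ⨆ n, bvar (μ n) c :=
    iSup_le fun n => ((hadd n).bvar_sup_le hbc).trans
      (add_le_add (le_iSup (fun m => bvar (μ m) b) n) (le_iSup (fun m => bvar (μ m) c) n))
  exact ENNReal.add_ne_top.mpr hlight (top_le_iff.mp (h ▸ hle))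

theorem IsHeavy.exists_lt_abs_and_isHeavy_sdiff (hadd : ∀ n, FinAdd (μ n))
    (hbdd : ∀ n, bvar (μ n) ⊤ ≠ ⊤)
    (hpt : ∀ a : α, Tendsto (fun n => μ n a) atTop (nhds 0)) {a : α} (ha : IsHeavy μ a)
    (k : ℝ) (N : ℕ) : ∃ n, N < n ∧ ∃ b ≤ a, k < |μ n b| ∧ IsHeavy μ (a \ b) := by
  obtain ⟨N', hN'⟩ : ∃ N', ∀ n ≥ N', |μ n a| < 1 := by
    simpa using eventually_atTop.mp ((hpt a).eventually (eventually_abs_sub_lt 0 one_pos))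
  obtain ⟨n, hn, hbig⟩ := ha.exists_lt_bvar hbdd ENNReal.ofReal_ne_top (max N N')
  obtain ⟨b, hba, hb⟩ := exists_lt_abs_of_ofReal_lt_bvar (r := k + 1) hbig
  have hNn : N < n := (le_max_left _ _).trans_lt hn
  have hdisj : b ⊓ (a \ b) = ⊥ := disjoint_sdiff_self_right.eq_bot
  have hsup : b ⊔ (a \ b) = a := sup_sdiff_cancel_right hba
  rw [← hsup] at ha
  rcases IsHeavy.left_or_right_of_sup hadd hdisj ha with hbh | hcompl
  · refine ⟨n, hNn, a \ b, sdiff_le, ?_, by rwa [sdiff_sdiff_right_self, inf_eq_right.mpr hba]⟩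
    have hsplit : μ n a = μ n b + μ n (a \ b) := by rw [← hadd n _ _ hdisj, hsup]
    have hle : |μ n b| ≤ |μ n a| + |μ n (a \ b)| := by
      rw [show μ n b = μ n a - μ n (a \ b) by linarith]
      exact abs_sub _ _
    linarith [hN' n ((le_max_right _ _).trans hn.le)]
  · exact ⟨n, hNn, b, hba, by linarith, hcompl⟩

end Heavy

/-- For every anti-Nikodym sequence `(μ_n)` on a Boolean algebra there exist an antichain
`(A_k)` and a strictly increasing sequence `(n_k)` with `|μ_{n_k}(A_k)| > k` for all `k`. -/
theorem stmt_2 [BooleanAlgebra α] (μ : ℕ → α → ℝ)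
    (hadd : ∀ n, FinAdd (μ n)) (hbdd : ∀ n, bvar (μ n) ⊤ ≠ ⊤)
    (hpt : ∀ a : α, Tendsto (fun n => μ n a) atTop (nhds 0))
    (hub : (⨆ n, bvar (μ n) ⊤) = ⊤) :
    ∃ (A : ℕ → α) (nk : ℕ → ℕ), StrictMono nk ∧
      (∀ k, A k ≠ ⊥) ∧ (∀ k j, k ≠ j → A k ⊓ A j = ⊥) ∧
      ∀ k : ℕ, (k : ℝ) < |μ (nk k) (A k)| := by
  obtain ⟨A, nk, hmono, hdisj, hlt⟩ :=
    exists_strictMono_pairwise_disjoint (Q := fun k n b => (k : ℝ) < |μ n b|) (a₀ := ⊤)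
      (show IsHeavy μ ⊤ from hub) fun _ ha k N =>
        ha.exists_lt_abs_and_isHeavy_sdiff hadd hbdd hpt k N
  refine ⟨A, nk, hmono, fun k hk => ?_, fun k j hkj => (hdisj hkj).eq_bot, hlt⟩
  have hk' := hlt k
  rw [hk, (hadd _).map_bot, abs_zero] at hk'
  exact hk'.not_ge k.cast_nonneg
end

section
/- Let A be a Boolean algebra, μ ∈ ba(A), ε > 0, and t a point of the Stone space St(A). Then there exists A ∈ A with t in the clopen set [A] such that |μ̂|([A] \ {t}) < ε, where μ̂ is the Radon extension of μ and |μ̂| its total variation. -/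
open Filter
open scoped ENNReal

variable {α : Type*}

open MeasureTheory

/-- A representation of the Boolean algebra `α` by the clopen subsets of its Stone space `S`. -/
structure StoneRep (α S : Type*) [BooleanAlgebra α] [TopologicalSpace S] where
  e : α → Set S
  isClopen : ∀ a, IsClopen (e a)
  map_bot : e ⊥ = ∅
  map_top : e ⊤ = Set.univ
  map_sup : ∀ a b, e (a ⊔ b) = e a ∪ e b
  map_inf : ∀ a b, e (a ⊓ b) = e a ∩ e b
  map_compl : ∀ a, e aᶜ = (e a)ᶜ
  injective : Function.Injective e
  surj_clopen : ∀ U : Set S, IsClopen U → ∃ a, e a = U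

namespace StoneRep

variable {α S : Type*} [BooleanAlgebra α] [TopologicalSpace S] [CompactSpace S] [T2Space S]
  [TotallyDisconnectedSpace S]

theorem exists_mem_subset_of_isOpen (R : StoneRep α S) {U : Set S} (hU : IsOpen U) {t : S}
    (htU : t ∈ U) : ∃ a, t ∈ R.e a ∧ R.e a ⊆ U := by
  obtain ⟨V, hV, htV, hVU⟩ := compact_exists_isClopen_in_isOpen hU htU
  obtain ⟨a, rfl⟩ := R.surj_clopen V hV
  exact ⟨a, htV, hVU⟩

theorem exists_mem_measure_sdiff_singleton_lt [MeasurableSpace S] [OpensMeasurableSpace S]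
    (R : StoneRep α S) (ν : Measure S) [ν.OuterRegular] {t : S} (ht : ν {t} ≠ ∞)
    {ε : ℝ≥0∞} (hε : ε ≠ 0) : ∃ a, t ∈ R.e a ∧ ν (R.e a \ {t}) < ε := by
  obtain ⟨U, htU, hU, -, hUt⟩ := (measurableSet_singleton t).exists_isOpen_sdiff_lt ht hε
  obtain ⟨a, hta, haU⟩ := R.exists_mem_subset_of_isOpen hU (htU rfl)
  exact ⟨a, hta, (measure_mono (Set.sdiff_subset_sdiff_left haU)).trans_lt hUt⟩

end StoneRep

theorem stmt_4_general {α S : Type*} [BooleanAlgebra α] [TopologicalSpace S] [CompactSpace S]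
    [T2Space S] [TotallyDisconnectedSpace S] [MeasurableSpace S] [BorelSpace S]
    (R : StoneRep α S)
    (μhat : MeasureTheory.SignedMeasure S)
    (hreg : μhat.totalVariation.Regular)
    (ε : ℝ) (hε : 0 < ε) (t : S) :
    ∃ a : α, t ∈ R.e a ∧ μhat.totalVariation (R.e a \ {t}) < ENNReal.ofReal ε :=
  have := hreg.toOuterRegular
  R.exists_mem_measure_sdiff_singleton_lt _ (measure_ne_top _ _) (ENNReal.ofReal_pos.2 hε).ne'

/-- For every measure `μ` on a Boolean algebra, every `ε > 0`, and every point `t` of the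
Stone space, there is `A` with `t ∈ [A]` and `|μ̂|([A] \ {t}) < ε`. -/
theorem stmt_4 {α S : Type*} [BooleanAlgebra α] [TopologicalSpace S] [CompactSpace S]
    [T2Space S] [TotallyDisconnectedSpace S] [MeasurableSpace S] [BorelSpace S]
    (R : StoneRep α S) (μ : α → ℝ)
    (hadd : FinAdd μ) (hbdd : bvar μ ⊤ ≠ ⊤)
    (μhat : MeasureTheory.SignedMeasure S)
    (hext : ∀ a, μhat (R.e a) = μ a)
    (hreg : μhat.totalVariation.Regular)
    (ε : ℝ) (hε : 0 < ε) (t : S) :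
    ∃ a : α, t ∈ R.e a ∧ μhat.totalVariation (R.e a \ {t}) < ENNReal.ofReal ε :=
  stmt_4_general R μhat hreg ε hε t
end

section
/- Let A be a Boolean algebra, I an ideal in A, and α ∈ ℝ. For μ ∈ ba(I) define T_α(μ) on the subalgebra A⟨I⟩ = I ∪ I* by T_α(μ)(A) = μ(A) if A ∈ I, and T_α(μ)(A) = −μ(Aᶜ) + α if A ∈ I*. Then T_α(μ) is a bounded finitely additive measure on A⟨I⟩ extending μ, and max(‖μ‖, |α|) ≤ ‖T_α(μ)‖ ≤ 2‖μ‖ + |α|. -/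
open Filter
open scoped ENNReal

variable {α : Type*}

/-- Finite additivity on the subfamily `s`. -/
def FinAddOn [BooleanAlgebra α] (s : Set α) (μ : α → ℝ) : Prop :=
  ∀ a b : α, a ∈ s → b ∈ s → a ⊓ b = ⊥ → μ (a ⊔ b) = μ a + μ b

/-- The subalgebra `A⟨I⟩ = I ∪ I*` of `α` generated by the ideal `I`. -/
def genSet [BooleanAlgebra α] (I : Order.Ideal α) : Set α := {a : α | a ∈ I ∨ aᶜ ∈ I}

open Classical in
/-- The extension `T_c(μ)` of a measure `μ ∈ ba(I)` to `A⟨I⟩`: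
`T_c(μ)(a) = μ(a)` if `a ∈ I`, and `T_c(μ)(a) = -μ(aᶜ) + c` otherwise. -/
noncomputable def extMap [BooleanAlgebra α] (I : Order.Ideal α) (μ : α → ℝ) (c : ℝ) :
    α → ℝ :=
  fun a => if a ∈ I then μ a else -μ aᶜ + c

/-! The extension only reverses the sign of `μ` on complements and adds the constant `c` there, so
additivity across `I` and `I*` reduces to `μ(bᶜ) = μ(a) + μ(bᶜ \ a)` inside `I`. For the norm, a
disjoint pair in `A⟨I⟩` has at most one member in `I*`, so it costs at most two values of `μ` on `I`
plus `|c|`; the pair `(⊤, ⊥)` alone already sees `|c|`. -/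

section ExtMap

variable [BooleanAlgebra α] {I : Order.Ideal α} {μ : α → ℝ} {c : ℝ} {s : Set α} {a b d : α}

theorem Order.Ideal.mem_of_compl_mem_of_inf_eq_bot (ha : aᶜ ∈ I) (hab : a ⊓ b = ⊥) : b ∈ I :=
  I.lower (le_compl_iff_disjoint_right.2 (disjoint_iff.2 (inf_comm a b ▸ hab))) ha

theorem FinAddOn.apply_eq_add_sdiff (hadd : FinAddOn (I : Set α) μ) (hd : d ∈ I) (had : a ≤ d) :
    μ d = μ a + μ (d \ a) := by
  have := hadd a (d \ a) (I.lower had hd) (I.lower sdiff_le hd) inf_sdiff_self_right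
  rwa [sup_sdiff_cancel_right had] at this

theorem extMap_of_mem (ha : a ∈ I) : extMap I μ c a = μ a := if_pos ha

theorem extMap_of_not_mem (ha : a ∉ I) : extMap I μ c a = -μ aᶜ + c := if_neg ha

theorem extMap_sup_of_mem_of_not_mem (hadd : FinAddOn (I : Set α) μ) (ha : a ∈ I) (hb : b ∉ I)
    (hbc : bᶜ ∈ I) (hab : a ⊓ b = ⊥) :
    extMap I μ c (a ⊔ b) = extMap I μ c a + extMap I μ c b := by
  have hsup : a ⊔ b ∉ I := fun h => hb (I.lower le_sup_right h)
  have hsplit : μ bᶜ = μ a + μ (bᶜ \ a) :=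
    hadd.apply_eq_add_sdiff hbc (le_compl_iff_disjoint_right.2 (disjoint_iff.2 hab))
  rw [extMap_of_not_mem hsup, extMap_of_mem ha, extMap_of_not_mem hb, hsplit, compl_sup,
    sdiff_eq, inf_comm]
  ring

theorem finAddOn_extMap (hadd : FinAddOn (I : Set α) μ) :
    FinAddOn (genSet I) (extMap I μ c) := by
  intro a b ha hb hab
  by_cases hA : a ∈ I <;> by_cases hB : b ∈ I
  · rw [extMap_of_mem (I.sup_mem hA hB), extMap_of_mem hA, extMap_of_mem hB, hadd a b hA hB hab]
  · exact extMap_sup_of_mem_of_not_mem hadd hA hB (hb.resolve_left hB) hab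
  · rw [sup_comm, add_comm]
    exact extMap_sup_of_mem_of_not_mem hadd hB hA (ha.resolve_left hA) (inf_comm a b ▸ hab)
  · exact absurd (I.mem_of_compl_mem_of_inf_eq_bot (ha.resolve_left hA) hab) hB

theorem ofReal_le_svar {ν : α → ℝ} (ha : a ∈ s) (hb : b ∈ s) (hab : a ⊓ b = ⊥) :
    ENNReal.ofReal (|ν a| + |ν b|) ≤ svar ν s :=
  le_iSup_of_le ⟨(a, b), ha, hb, hab⟩ le_rfl

theorem ofReal_abs_le_svar {ν : α → ℝ} (hbot : ⊥ ∈ s) (ha : a ∈ s) :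
    ENNReal.ofReal |ν a| ≤ svar ν s :=
  (ENNReal.ofReal_le_ofReal (le_add_of_nonneg_right (abs_nonneg _))).trans
    (ofReal_le_svar ha hbot (inf_bot_eq a))

theorem svar_le_svar_of_eqOn {ν : α → ℝ} {t : Set α} (hst : s ⊆ t) (heq : Set.EqOn μ ν s) :
    svar μ s ≤ svar ν t :=
  iSup_le fun ⟨(a, b), ha, hb, hab⟩ => by
    simpa only [heq ha, heq hb] using ofReal_le_svar (hst ha) (hst hb) hab

theorem svar_le_svar_extMap : svar μ (I : Set α) ≤ svar (extMap I μ c) (genSet I) :=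
  svar_le_svar_of_eqOn (fun _ => Or.inl) fun _ ha => (extMap_of_mem ha).symm

theorem ofReal_abs_le_svar_extMap (hproper : (⊤ : α) ∉ I) :
    ENNReal.ofReal |c| ≤ svar (extMap I μ c) (genSet I) := by
  have hbot : (⊥ : α) ∈ I := I.bot_mem
  have htop : (⊤ : α) ∈ genSet I := Or.inr ((compl_top (α := α)).symm ▸ hbot)
  refine le_trans ?_ (ofReal_le_svar htop (Or.inl hbot) (inf_bot_eq ⊤))
  rw [extMap_of_not_mem hproper, extMap_of_mem hbot, compl_top]
  refine ENNReal.ofReal_le_ofReal ?_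
  calc |c| = |(-μ ⊥ + c) + μ ⊥| := by ring_nf
    _ ≤ |-μ ⊥ + c| + |μ ⊥| := abs_add_le _ _

theorem ofReal_extMap_le_of_mem_of_compl_mem (ha : a ∈ I) (hb : b ∉ I) (hbc : bᶜ ∈ I) :
    ENNReal.ofReal (|extMap I μ c a| + |extMap I μ c b|) ≤
      2 * svar μ (I : Set α) + ENNReal.ofReal |c| := by
  rw [extMap_of_mem ha, extMap_of_not_mem hb, two_mul]
  calc ENNReal.ofReal (|μ a| + |-μ bᶜ + c|)
      ≤ ENNReal.ofReal (|μ a| + |μ bᶜ| + |c|) := by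
        refine ENNReal.ofReal_le_ofReal ?_
        have := abs_sub c (μ bᶜ)
        rw [neg_add_eq_sub]
        linarith
    _ = ENNReal.ofReal |μ a| + ENNReal.ofReal |μ bᶜ| + ENNReal.ofReal |c| := by
        rw [ENNReal.ofReal_add (by positivity) (abs_nonneg _),
          ENNReal.ofReal_add (abs_nonneg _) (abs_nonneg _)]
    _ ≤ svar μ I + svar μ I + ENNReal.ofReal |c| := by
        gcongr <;> exact ofReal_abs_le_svar I.bot_mem ‹_›

theorem svar_extMap_le : svar (extMap I μ c) (genSet I) ≤
    2 * svar μ (I : Set α) + ENNReal.ofReal |c| := by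
  refine iSup_le fun ⟨(a, b), ha, hb, hab⟩ => ?_
  by_cases hA : a ∈ I <;> by_cases hB : b ∈ I
  · calc ENNReal.ofReal (|extMap I μ c a| + |extMap I μ c b|)
        ≤ svar μ (I : Set α) := by
          simpa only [extMap_of_mem hA, extMap_of_mem hB] using ofReal_le_svar hA hB hab
      _ ≤ 2 * svar μ (I : Set α) + ENNReal.ofReal |c| :=
          le_add_right (le_mul_of_one_le_left' one_le_two)
  · exact ofReal_extMap_le_of_mem_of_compl_mem hA hB (hb.resolve_left hB)
  · rw [add_comm]
    exact ofReal_extMap_le_of_mem_of_compl_mem hB hA (ha.resolve_left hA)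
  · exact absurd (I.mem_of_compl_mem_of_inf_eq_bot (ha.resolve_left hA) hab) hB

end ExtMap

/-- `T_c(μ)` is a bounded finitely additive measure on `A⟨I⟩` extending `μ`, with
`max(‖μ‖, |c|) ≤ ‖T_c(μ)‖ ≤ 2‖μ‖ + |c|`. -/
theorem stmt_6 [BooleanAlgebra α] (I : Order.Ideal α) (hproper : (⊤ : α) ∉ I)
    (μ : α → ℝ) (c : ℝ)
    (hadd : FinAddOn (I : Set α) μ) (hbdd : svar μ (I : Set α) ≠ ⊤) :
    FinAddOn (genSet I) (extMap I μ c) ∧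
    (∀ a ∈ I, extMap I μ c a = μ a) ∧
    svar (extMap I μ c) (genSet I) ≠ ⊤ ∧
    max (svar μ (I : Set α)) (ENNReal.ofReal |c|) ≤ svar (extMap I μ c) (genSet I) ∧
    svar (extMap I μ c) (genSet I) ≤ 2 * svar μ (I : Set α) + ENNReal.ofReal |c| := by
  have hup := svar_extMap_le (I := I) (μ := μ) (c := c)
  refine ⟨finAddOn_extMap hadd, fun _ => extMap_of_mem, ?_,
    max_le svar_le_svar_extMap (ofReal_abs_le_svar_extMap hproper), hup⟩
  exact ne_top_of_le_ne_top
    (ENNReal.add_ne_top.2 ⟨ENNReal.mul_ne_top ENNReal.ofNat_ne_top hbdd, ENNReal.ofReal_ne_top⟩) hup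
end
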